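/- The Hessian of the ListNet loss with respect to the score vector satisfies ‖∇_s² φ_LN(s,y)‖_{∞→1} ≤ 2 for all s, y ∈ ℝ^m, where ‖M‖_{∞→1} = sup_{v≠0} ‖Mv‖_1/‖v‖_∞. In particular, the sum over all entries of absolute values of the Hessian is at most 2. -/
import Mathlib


open scoped BigOperators

/-- The softmax probability `P_j(v) = exp(v_j) / ∑_i exp(v_i)`. -/
noncomputable def softmaxP {m : ℕ} (j : Fin m) (v : Fin m → ℝ) : ℝ :=
  Real.exp (v j) / ∑ i, Real.exp (v i)

/-- The Hessian of the ListNet loss w.r.t. the score vector: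
`(∇²φ_LN)_{jk} = P_j(s) 1_{j=k} - P_j(s) P_k(s)`. -/
noncomputable def listNetHess {m : ℕ} (s : Fin m → ℝ) : Matrix (Fin m) (Fin m) ℝ :=
  fun j k => softmaxP j s * (if j = k then 1 else 0) - softmaxP j s * softmaxP k s

lemma softmaxP_nonneg {m : ℕ} (j : Fin m) (v : Fin m → ℝ) : 0 ≤ softmaxP j v := by
  unfold softmaxP
  positivity

lemma softmaxP_sum {m : ℕ} [Nonempty (Fin m)] (v : Fin m → ℝ) :
    ∑ j, softmaxP j v = 1 := by
  have h : (0:ℝ) < ∑ i, Real.exp (v i) :=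
    Finset.sum_pos (fun i _ => Real.exp_pos _) Finset.univ_nonempty
  unfold softmaxP
  rw [← Finset.sum_div, div_self h.ne']

lemma softmaxP_le_one {m : ℕ} (j : Fin m) (v : Fin m → ℝ) : softmaxP j v ≤ 1 := by
  unfold softmaxP
  have h : (0:ℝ) < ∑ i, Real.exp (v i) :=
    Finset.sum_pos (fun i _ => Real.exp_pos _) ⟨j, Finset.mem_univ j⟩
  rw [div_le_one h]
  exact Finset.single_le_sum (fun i _ => (Real.exp_pos _).le) (Finset.mem_univ j)

lemma listNetHess_abs_sum_le {m : ℕ} (s : Fin m → ℝ) :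
    ∑ j, ∑ k, |listNetHess s j k| ≤ 2 := by
  rcases isEmpty_or_nonempty (Fin m) with h | h
  · simp
  calc ∑ j, ∑ k, |listNetHess s j k|
      ≤ ∑ j, 2 * softmaxP j s := by
        apply Finset.sum_le_sum
        intro j _
        have hP := softmaxP_nonneg j s
        have hP1 := softmaxP_le_one j s
        have : ∑ k, |listNetHess s j k| =
            |listNetHess s j j| + ∑ k ∈ Finset.univ.erase j, |listNetHess s j k| :=
          (Finset.add_sum_erase _ _ (Finset.mem_univ j)).symm
        rw [this]
        have h1 : |listNetHess s j j| = softmaxP j s * (1 - softmaxP j s) := by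
          unfold listNetHess
          rw [if_pos rfl]
          rw [abs_of_nonneg (by nlinarith)]
          ring
        have h2 : ∑ k ∈ Finset.univ.erase j, |listNetHess s j k|
            = softmaxP j s * (1 - softmaxP j s) := by
          have : ∀ k ∈ Finset.univ.erase j, |listNetHess s j k|
              = softmaxP j s * softmaxP k s := by
            intro k hk
            have hkj : j ≠ k := fun hkj => (Finset.mem_erase.mp hk).1 hkj.symm
            unfold listNetHess
            rw [if_neg hkj]
            rw [abs_of_nonpos (by nlinarith [softmaxP_nonneg k s])]
            ring
          rw [Finset.sum_congr rfl this, ← Finset.mul_sum]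
          congr 1
          have := softmaxP_sum (m := m) s
          have := Finset.add_sum_erase Finset.univ (fun k => softmaxP k s)
            (Finset.mem_univ j)
          linarith
        rw [h1, h2]
        nlinarith
    _ = 2 * ∑ j, softmaxP j s := by rw [Finset.mul_sum]
    _ = 2 := by rw [softmaxP_sum]; norm_num

/-- The Hessian of the ListNet loss satisfies `‖∇²φ_LN(s,y)‖_{∞→1} ≤ 2`, where
`‖M‖_{∞→1} = sup_{v≠0} ‖Mv‖₁/‖v‖_∞`; in particular the sum of absolute values of all
its entries is at most 2. -/
theorem listNet_hess_infty_one_le_two {m : ℕ} (s : Fin m → ℝ) :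
    (⨆ v : {v : Fin m → ℝ // v ≠ 0},
        (∑ j, |((listNetHess s).mulVec (v : Fin m → ℝ)) j|) / ⨆ k, |(v : Fin m → ℝ) k|)
      ≤ 2 ∧
    ∑ j, ∑ k, |listNetHess s j k| ≤ 2 := by
  refine ⟨?_, listNetHess_abs_sum_le s⟩
  apply Real.iSup_le _ (by norm_num)
  rintro ⟨v, hv⟩
  simp only
  obtain ⟨k₀, hk₀⟩ := Function.ne_iff.mp hv
  have : Nonempty (Fin m) := ⟨k₀⟩
  set C := ⨆ k, |v k| with hC
  have hbdd : BddAbove (Set.range fun k => |v k|) := (Set.finite_range _).bddAbove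
  have hle : ∀ k, |v k| ≤ C := fun k => le_ciSup hbdd k
  have hCpos : 0 < C := lt_of_lt_of_le (abs_pos.mpr hk₀) (hle k₀)
  rw [div_le_iff₀ hCpos]
  calc ∑ j, |(listNetHess s).mulVec v j|
      ≤ ∑ j, ∑ k, |listNetHess s j k| * C := by
        apply Finset.sum_le_sum
        intro j _
        calc |(listNetHess s).mulVec v j| ≤ ∑ k, |listNetHess s j k * v k| := by
              simp only [Matrix.mulVec, dotProduct]
              exact Finset.abs_sum_le_sum_abs _ _
          _ ≤ ∑ k, |listNetHess s j k| * C := by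
              apply Finset.sum_le_sum
              intro k _
              rw [abs_mul]
              exact mul_le_mul_of_nonneg_left (hle k) (abs_nonneg _)
    _ = (∑ j, ∑ k, |listNetHess s j k|) * C := by
        rw [Finset.sum_mul]
        exact Finset.sum_congr rfl fun j _ => (Finset.sum_mul _ _ _).symm
    _ ≤ 2 * C := mul_le_mul_of_nonneg_right (listNetHess_abs_sum_le s) hCpos.le
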